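/- Let 𝐊 be an Effros-measurable map from Ω to closed convex cones in ℝ^d containing ℝ₋^d, possessing a p-integrable selection, and let X ∈ L^p(Ω; ℝ^d) be such that 𝐫(X) = (r₁(X₁),…,r_d(X_d)) is finite. Then 𝐫(X) + ρ_{s,0}(𝐊) ⊆ ρ_{s,0}(X + 𝐊), where X + 𝐊 is the set-valued portfolio ω ↦ X(ω) + 𝐊(ω); that is, for every x ∈ ρ_{s,0}(𝐊), the point 𝐫(X) + x belongs to ρ_{s,0}(X + 𝐊). -/

import Mathlib

open MeasureTheory Set Filter
open scoped Pointwise ENNReal RealInnerProductSpace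

noncomputable section

/-- `ℝ^d` with the Euclidean norm. -/
abbrev Vec (d : ℕ) := EuclideanSpace ℝ (Fin d)

/-- Effros measurability of a set-valued map: `{ω : X(ω) ∩ G ≠ ∅}` is measurable
for every open `G`. -/
def EffrosMeasurable {Ω : Type*} [MeasurableSpace Ω] {d : ℕ} (X : Ω → Set (Vec d)) : Prop :=
  ∀ G : Set (Vec d), IsOpen G → MeasurableSet {ω | (X ω ∩ G).Nonempty}

/-- A set-valued portfolio: an Effros-measurable map with nonempty closed convex
lower-set values. -/
structure IsPortfolio {Ω : Type*} [MeasurableSpace Ω] {d : ℕ} (X : Ω → Set (Vec d)) : Prop where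
  effros : EffrosMeasurable X
  nonempty : ∀ ω, (X ω).Nonempty
  isClosed : ∀ ω, IsClosed (X ω)
  convex : ∀ ω, Convex ℝ (X ω)
  lower : ∀ ω, ∀ x ∈ X ω, ∀ y : Vec d, (∀ i, y i ≤ x i) → y ∈ X ω

/-- A coherent risk measure on `L^p(Ω; ℝ)` with values in `ℝ ∪ {+∞} ⊆ EReal`:
monotone (antitone in the gain), cash invariant, subadditive and positively homogeneous. -/
structure IsCoherent {Ω : Type*} [MeasurableSpace Ω] (μ : Measure Ω) (p : ℝ≥0∞)
    (r : (Ω → ℝ) → EReal) : Prop where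
  ne_bot : ∀ ξ : Ω → ℝ, MemLp ξ p μ → r ξ ≠ ⊥
  mono : ∀ ξ η : Ω → ℝ, MemLp ξ p μ → MemLp η p μ → (∀ᵐ ω ∂μ, ξ ω ≤ η ω) → r η ≤ r ξ
  cash : ∀ ξ : Ω → ℝ, MemLp ξ p μ → ∀ c : ℝ, r (fun ω => ξ ω + c) = r ξ - (c : EReal)
  subadd : ∀ ξ η : Ω → ℝ, MemLp ξ p μ → MemLp η p μ →
    r (fun ω => ξ ω + η ω) ≤ r ξ + r η
  homog : ∀ ξ : Ω → ℝ, MemLp ξ p μ → ∀ c : ℝ, 0 < c →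
    r (fun ω => c * ξ ω) = (c : EReal) * r ξ

/-- The selection risk measure `ρ_{s,0}(𝐗)`: the set of deterministic `x ∈ ℝ^d`
for which `𝐗 + x` has a selection with all individually acceptable components. -/
def rho0 {Ω : Type*} [MeasurableSpace Ω] (μ : Measure Ω) (p : ℝ≥0∞) {d : ℕ}
    (r : Fin d → (Ω → ℝ) → EReal) (X : Ω → Set (Vec d)) : Set (Vec d) :=
  {x | ∃ ξ : Ω → Vec d, MemLp ξ p μ ∧ (∀ᵐ ω ∂μ, ξ ω ∈ X ω) ∧
        ∀ i, r i (fun ω => ξ ω i + x i) ≤ 0}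

/-! If `ξ` is a selection of `K` with `r_i(ξ_i + x_i) ≤ 0`, then `X + ξ` is a selection of `X + K`,
and subadditivity with cash invariance give
`r_i(X_i + ξ_i + r_i(X_i) + x_i) ≤ r_i(X_i) + r_i(ξ_i) - r_i(X_i) - x_i ≤ 0`. -/

namespace IsCoherent

variable {Ω : Type*} [MeasurableSpace Ω] {μ : Measure Ω} {p : ℝ≥0∞} {r : (Ω → ℝ) → EReal}
  {ξ η : Ω → ℝ}

theorem le_of_add_const_nonpos (hr : IsCoherent μ p r) (hξ : MemLp ξ p μ) {c : ℝ}
    (h : r (fun ω => ξ ω + c) ≤ 0) : r ξ ≤ c := by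
  rwa [hr.cash ξ hξ c, EReal.sub_nonpos] at h

theorem add_add_toReal_add_nonpos (hr : IsCoherent μ p r) (hξ : MemLp ξ p μ)
    (hη : MemLp η p μ) (hξtop : r ξ ≠ ⊤) {c : ℝ} (hηc : r (fun ω => η ω + c) ≤ 0) :
    r (fun ω => ξ ω + η ω + ((r ξ).toReal + c)) ≤ 0 := by
  refine (hr.cash _ (hξ.add hη) _).trans_le ?_
  have hrη : r η ≤ c := hr.le_of_add_const_nonpos hη hηc
  calc r (fun ω => ξ ω + η ω) - ↑((r ξ).toReal + c)
      ≤ (r ξ + r η) - ↑((r ξ).toReal + c) := EReal.sub_le_sub (hr.subadd ξ η hξ hη) le_rfl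
    _ ≤ ((r ξ).toReal + c : ℝ) - ↑((r ξ).toReal + c) := by
        refine EReal.sub_le_sub ?_ le_rfl
        exact_mod_cast add_le_add (EReal.le_coe_toReal hξtop) hrη
    _ ≤ 0 := EReal.sub_self_le_zero

end IsCoherent

theorem statement17 {Ω : Type*} [MeasurableSpace Ω] (μ : Measure Ω) {d : ℕ} (p : ℝ≥0∞)
    (r : Fin d → (Ω → ℝ) → EReal) (hr : ∀ i, IsCoherent μ p (r i))
    (K : Ω → Set (Vec d)) (X : Ω → Vec d) (hX : MemLp X p μ)
    (hfin : ∀ i, r i (fun ω => X ω i) ≠ ⊤ ∧ r i (fun ω => X ω i) ≠ ⊥) :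
    ∀ x ∈ rho0 μ p r K,
      (WithLp.toLp 2 (fun i => (r i (fun ω => X ω i)).toReal + x i) : Vec d) ∈
        rho0 μ p r (fun ω => (X ω + ·) '' K ω) := by
  rintro x ⟨ξ, hξ, hξK, hξr⟩
  refine ⟨fun ω => X ω + ξ ω, hX.add hξ, ?_, fun i => ?_⟩
  · filter_upwards [hξK] with ω hω using ⟨ξ ω, hω, rfl⟩
  · exact (hr i).add_add_toReal_add_nonpos (hX.eval_piLp i) (hξ.eval_piLp i) (hfin i).1 (hξr i)
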